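/- Let W = AD be cyclically reduced with A the maximal ascent of W and D ≠ 1. If a nonempty prefix U of D satisfies U ≻ 1, then AU ≻ A, contradicting maximality of A among subwords of cyclic permutations; hence every nonempty prefix of D satisfies U ≺ 1. -/

import Mathlib

variable {X : Type*}

/-- A word over `X ∪ X⁻¹` (a letter is a generator with a sign) is reduced if no
letter is immediately followed by its inverse. -/
def Reduced (w : List (X × Bool)) : Prop :=
  w.Chain' fun a b => a.1 = b.1 → a.2 = b.2

/-- A word is cyclically reduced if it is reduced and its first letter is not the
inverse of its last letter. -/
def CyclicallyReduced (w : List (X × Bool)) : Prop :=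
  Reduced w ∧ ∀ a ∈ w.head?, ∀ b ∈ w.getLast?, (a.1 = b.1 → a.2 = b.2)

/-- A word is periodic if it is a concatenation of `k > 1` copies of some word. -/
def Periodic (w : List (X × Bool)) : Prop :=
  ∃ (U : List (X × Bool)) (k : ℕ), 1 < k ∧ w = (List.replicate k U).flatten

section Order
variable [LinearOrder (FreeGroup X)]

/-- A word is an ascent (w.r.t. an order on the free group) if it is nonempty and
every nonempty prefix and every nonempty suffix represents an element `≻ 1`. -/
def IsAscent (w : List (X × Bool)) : Prop :=
  w ≠ [] ∧ (∀ i, 0 < i → i ≤ w.length → 1 < FreeGroup.mk (w.take i)) ∧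
    (∀ i, i < w.length → 1 < FreeGroup.mk (w.drop i))

/-- A word is a descent if it is nonempty and every nonempty prefix and every
nonempty suffix represents an element `≺ 1`. -/
def IsDescent (w : List (X × Bool)) : Prop :=
  w ≠ [] ∧ (∀ i, 0 < i → i ≤ w.length → FreeGroup.mk (w.take i) < 1) ∧
    (∀ i, i < w.length → FreeGroup.mk (w.drop i) < 1)

/-- `B` occurs as a subword of some cyclic permutation of `W` or of `W⁻¹`. -/
def InRW (W B : List (X × Bool)) : Prop :=
  ∃ W', (List.IsRotated W W' ∨ List.IsRotated (FreeGroup.invRev W) W') ∧ B <:+: W'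

/-- `A` is the maximal ascent of `W`: an ascent occurring as a subword of a cyclic
permutation of `W` or `W⁻¹`, and `⪰` every such ascent. -/
def IsMaxAscent (W A : List (X × Bool)) : Prop :=
  IsAscent A ∧ InRW W A ∧
    ∀ B, IsAscent B → InRW W B → FreeGroup.mk B ≤ FreeGroup.mk A

end Order

/- ------------------- auxiliary lemmas ------------------- -/

section AuxRed

theorem aux_reduce_eq [DecidableEq X] {w : List (X × Bool)} (h : Reduced w) :
    FreeGroup.reduce w = w := by
  induction w with
  | nil => rfl
  | cons a l ih =>
    rw [FreeGroup.reduce.cons, ih (List.IsChain.tail h)]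
    cases l with
    | nil => rfl
    | cons b t =>
      show (if a.1 = b.1 ∧ a.2 = !b.2 then t else a :: b :: t) = a :: b :: t
      rw [if_neg]
      rintro ⟨h1, h2⟩
      have h3 := (List.isChain_cons_cons.mp h).1 h1
      rw [h3] at h2
      simp at h2

theorem aux_mk_inj {u v : List (X × Bool)} (hu : Reduced u) (hv : Reduced v)
    (h : FreeGroup.mk u = FreeGroup.mk v) : u = v := by
  classical
  have h2 := congrArg FreeGroup.toWord h
  rwa [FreeGroup.toWord_mk, FreeGroup.toWord_mk, aux_reduce_eq hu, aux_reduce_eq hv] at h2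

theorem aux_mk_ne_one {u : List (X × Bool)} (hu : Reduced u) (h : u ≠ []) :
    FreeGroup.mk u ≠ 1 := by
  intro h1
  rw [FreeGroup.one_eq_mk] at h1
  exact h (aux_mk_inj hu List.isChain_nil h1)

theorem aux_mk_drop_take {w : List (X × Bool)} {j m : ℕ} (hjm : j ≤ m) :
    FreeGroup.mk ((w.take m).drop j)
      = (FreeGroup.mk (w.take j))⁻¹ * FreeGroup.mk (w.take m) := by
  have h1 : w.take j ++ (w.take m).drop j = w.take m := by
    conv_lhs => rw [show w.take j = (w.take m).take j by
      rw [List.take_take, min_eq_left hjm]]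
    exact List.take_append_drop j (w.take m)
  rw [eq_inv_mul_iff_mul_eq, FreeGroup.mul_mk, h1]

theorem aux_invRev_append (a b : List (X × Bool)) :
    FreeGroup.invRev (a ++ b) = FreeGroup.invRev b ++ FreeGroup.invRev a := by
  simp [FreeGroup.invRev]

theorem aux_invRev_take (v : List (X × Bool)) {i : ℕ} (hi : i ≤ v.length) :
    (FreeGroup.invRev v).take i = FreeGroup.invRev (v.drop (v.length - i)) := by
  have hsplit : FreeGroup.invRev v
      = FreeGroup.invRev (v.drop (v.length - i)) ++ FreeGroup.invRev (v.take (v.length - i)) := by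
    rw [← aux_invRev_append, List.take_append_drop]
  rw [hsplit, List.take_left']
  rw [FreeGroup.invRev_length, List.length_drop]
  omega

theorem aux_invRev_drop (v : List (X × Bool)) {i : ℕ} (hi : i ≤ v.length) :
    (FreeGroup.invRev v).drop i = FreeGroup.invRev (v.take (v.length - i)) := by
  have hsplit : FreeGroup.invRev v
      = FreeGroup.invRev (v.drop (v.length - i)) ++ FreeGroup.invRev (v.take (v.length - i)) := by
    rw [← aux_invRev_append, List.take_append_drop]
  rw [hsplit, List.drop_left']
  rw [FreeGroup.invRev_length, List.length_drop]
  omega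

theorem aux_invRev_infix {s W : List (X × Bool)} (h : s <:+: W) :
    FreeGroup.invRev s <:+: FreeGroup.invRev W := by
  simpa [FreeGroup.invRev] using List.reverse_infix.mpr (List.IsInfix.map _ h)

end AuxRed

section AuxOrder

variable [LinearOrder (FreeGroup X)]
  [CovariantClass (FreeGroup X) (FreeGroup X) (· * ·) (· < ·)]

theorem aux_ascent_slice (w : List (X × Bool)) {j k : ℕ} (hjk : j < k) (hk : k ≤ w.length)
    (hmin : ∀ i, j < i → i ≤ k → FreeGroup.mk (w.take j) < FreeGroup.mk (w.take i))
    (hmax' : ∀ i, j ≤ i → i < k → FreeGroup.mk (w.take i) < FreeGroup.mk (w.take k)) :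
    IsAscent ((w.take k).drop j) := by
  have hlen : ((w.take k).drop j).length = k - j := by
    simp [Nat.min_eq_left hk]
  refine ⟨?_, ?_, ?_⟩
  · intro h
    rw [h] at hlen
    simp at hlen
    omega
  · intro i hi hile
    rw [hlen] at hile
    have htake : ((w.take k).drop j).take i = (w.take (j + i)).drop j := by
      rw [List.drop_take, List.take_take, List.drop_take]
      congr 1
      omega
    rw [htake, aux_mk_drop_take (by omega : j ≤ j + i)]
    have h2 := hmin (j + i) (by omega) (by omega)
    have h3 := mul_lt_mul_right h2 (FreeGroup.mk (w.take j))⁻¹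
    rwa [inv_mul_cancel] at h3
  · intro i hi
    rw [hlen] at hi
    rw [List.drop_drop, aux_mk_drop_take (by omega : j + i ≤ k)]
    have h2 := hmax' (j + i) (by omega) (by omega)
    have h3 := mul_lt_mul_right h2 (FreeGroup.mk (w.take (j + i)))⁻¹
    rwa [inv_mul_cancel] at h3

theorem aux_descent_slice (w : List (X × Bool)) {j k : ℕ} (hjk : j < k) (hk : k ≤ w.length)
    (hmax' : ∀ i, j < i → i ≤ k → FreeGroup.mk (w.take i) < FreeGroup.mk (w.take j))
    (hmin : ∀ i, j ≤ i → i < k → FreeGroup.mk (w.take k) < FreeGroup.mk (w.take i)) :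
    IsDescent ((w.take k).drop j) := by
  have hlen : ((w.take k).drop j).length = k - j := by
    simp [Nat.min_eq_left hk]
  refine ⟨?_, ?_, ?_⟩
  · intro h
    rw [h] at hlen
    simp at hlen
    omega
  · intro i hi hile
    rw [hlen] at hile
    have htake : ((w.take k).drop j).take i = (w.take (j + i)).drop j := by
      rw [List.drop_take, List.take_take, List.drop_take]
      congr 1
      omega
    rw [htake, aux_mk_drop_take (by omega : j ≤ j + i)]
    have h2 := hmax' (j + i) (by omega) (by omega)
    have h3 := mul_lt_mul_right h2 (FreeGroup.mk (w.take j))⁻¹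
    rwa [inv_mul_cancel] at h3
  · intro i hi
    rw [hlen] at hi
    rw [List.drop_drop, aux_mk_drop_take (by omega : j + i ≤ k)]
    have h2 := hmin (j + i) (by omega) (by omega)
    have h3 := mul_lt_mul_right h2 (FreeGroup.mk (w.take (j + i)))⁻¹
    rwa [inv_mul_cancel] at h3

theorem aux_isAscent_invRev {v : List (X × Bool)} (h : IsDescent v) :
    IsAscent (FreeGroup.invRev v) := by
  obtain ⟨hne, hpre, hsuf⟩ := h
  have hvpos : 0 < v.length := List.length_pos_iff.mpr hne
  have hlen : (FreeGroup.invRev v).length = v.length := FreeGroup.invRev_length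
  refine ⟨?_, ?_, ?_⟩
  · intro hh
    exact hne (FreeGroup.invRev_injective (hh.trans FreeGroup.invRev_empty.symm))
  · intro i hi hile
    rw [hlen] at hile
    rw [aux_invRev_take v hile, ← FreeGroup.inv_mk]
    have h2 := hsuf (v.length - i) (by omega)
    have h3 := mul_lt_mul_right h2 (FreeGroup.mk (v.drop (v.length - i)))⁻¹
    rwa [inv_mul_cancel, mul_one] at h3
  · intro i hi
    rw [hlen] at hi
    rw [aux_invRev_drop v (le_of_lt hi), ← FreeGroup.inv_mk]
    have h2 := hpre (v.length - i) (by omega) (by omega)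
    have h3 := mul_lt_mul_right h2 (FreeGroup.mk (v.take (v.length - i)))⁻¹
    rwa [inv_mul_cancel, mul_one] at h3

end AuxOrder

/-- If `W = AD` is cyclically reduced with `A` the maximal ascent and `D ≠ 1`,
then every nonempty prefix `U` of `D` satisfies `U ≺ 1` (a nonempty prefix with
`U ≻ 1` would give `AU ≻ A`, contradicting the maximality of `A`). -/
theorem prefixes_of_complement_neg [LinearOrder (FreeGroup X)]
    [CovariantClass (FreeGroup X) (FreeGroup X) (· * ·) (· < ·)]
    [CovariantClass (FreeGroup X) (FreeGroup X) (Function.swap (· * ·)) (· < ·)]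
    (W A D : List (X × Bool)) (hcr : CyclicallyReduced W)
    (hmax : IsMaxAscent W A) (hW : W = A ++ D) (hD : D ≠ []) :
    ∀ U, U ≠ [] → U <+: D → FreeGroup.mk U < 1 := by
  haveI : CovariantClass (FreeGroup X) (FreeGroup X) (· * ·) (· ≤ ·) :=
    covariantClass_le_of_lt _ _ _
  haveI : CovariantClass (FreeGroup X) (FreeGroup X) (Function.swap (· * ·)) (· ≤ ·) :=
    covariantClass_le_of_lt _ _ _
  intro U hU hpre
  by_contra hlt
  push_neg at hlt
  -- setup
  have hAne : A ≠ [] := hmax.1.1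
  have hA1 : 1 < FreeGroup.mk A := by
    have := hmax.1.2.1 A.length (List.length_pos_iff.mpr hAne) le_rfl
    rwa [List.take_length] at this
  set w : List (X × Bool) := A ++ U with hw
  have hwpre : w <+: W := by
    obtain ⟨t, ht⟩ := hpre
    exact ⟨t, by rw [hW, ← ht, List.append_assoc]⟩
  have hwred : Reduced w := List.IsChain.prefix hcr.1 hwpre
  have hUred : Reduced U := List.IsChain.infix hcr.1
    (List.IsInfix.trans ⟨A, [], by simp [hw]⟩ hwpre.isInfix)
  have hU1 : 1 < FreeGroup.mk U := lt_of_le_of_ne hlt (Ne.symm (aux_mk_ne_one hUred hU))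
  -- injectivity of prefixes
  have hinj : ∀ i ≤ w.length, ∀ i' ≤ w.length,
      FreeGroup.mk (w.take i) = FreeGroup.mk (w.take i') → i = i' := by
    intro i hi i' hi' he
    have h2 := aux_mk_inj (List.IsChain.prefix hwred (List.take_prefix i w))
      (List.IsChain.prefix hwred (List.take_prefix i' w)) he
    have h3 := congrArg List.length h2
    simp only [List.length_take] at h3
    omega
  obtain ⟨j, hjS, hjmin⟩ := Finset.exists_min_image (Finset.range (w.length + 1))
    (fun i => FreeGroup.mk (w.take i)) ⟨0, Finset.mem_range.mpr (by omega)⟩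
  obtain ⟨k, hkS, hkmax⟩ := Finset.exists_max_image (Finset.range (w.length + 1))
    (fun i => FreeGroup.mk (w.take i)) ⟨0, Finset.mem_range.mpr (by omega)⟩
  have hjw : j ≤ w.length := by have := Finset.mem_range.mp hjS; omega
  have hkw : k ≤ w.length := by have := Finset.mem_range.mp hkS; omega
  have hfj1 : FreeGroup.mk (w.take j) ≤ 1 := by
    have := hjmin 0 (Finset.mem_range.mpr (by omega))
    simpa [← FreeGroup.one_eq_mk] using this
  have hinvj : 1 ≤ (FreeGroup.mk (w.take j))⁻¹ := by
    have h3 := mul_le_mul_right hfj1 (FreeGroup.mk (w.take j))⁻¹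
    rwa [inv_mul_cancel, mul_one] at h3
  have hwfull : FreeGroup.mk (w.take w.length) = FreeGroup.mk A * FreeGroup.mk U := by
    rw [List.take_length, FreeGroup.mul_mk]
  have hwk : FreeGroup.mk A < FreeGroup.mk (w.take k) := by
    have h2 := hkmax w.length (Finset.mem_range.mpr (by omega))
    simp only [hwfull] at h2
    exact lt_of_lt_of_le (lt_mul_of_one_lt_right' _ hU1) h2
  have hjk : j ≠ k := by
    intro he
    rw [he] at hfj1
    exact lt_irrefl _ (hfj1.trans_lt (hA1.trans hwk))
  rcases lt_or_gt_of_ne hjk with h | h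
  · -- ascent slice from j to k
    have hasc : IsAscent ((w.take k).drop j) := by
      refine aux_ascent_slice w h hkw ?_ ?_
      · intro i h1 h2
        refine lt_of_le_of_ne (hjmin i (Finset.mem_range.mpr (by omega))) ?_
        intro he
        exact absurd (hinj j hjw i (by omega) he) (by omega)
      · intro i h1 h2
        refine lt_of_le_of_ne (hkmax i (Finset.mem_range.mpr (by omega))) ?_
        intro he
        exact absurd (hinj i (by omega) k hkw he) (by omega)
    have hinf : ((w.take k).drop j) <:+: W :=
      (((w.take k).drop_suffix j).isInfix.trans (w.take_prefix k).isInfix).trans hwpre.isInfix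
    have hle := hmax.2.2 _ hasc ⟨W, Or.inl (List.IsRotated.refl W), hinf⟩
    have hgt : FreeGroup.mk A < FreeGroup.mk ((w.take k).drop j) := by
      rw [aux_mk_drop_take (le_of_lt h)]
      exact lt_of_lt_of_le hwk (le_mul_of_one_le_left' hinvj)
    exact absurd hle (not_le.mpr hgt)
  · -- descent slice from k to j, then invert
    have hdesc : IsDescent ((w.take j).drop k) := by
      refine aux_descent_slice w h hjw ?_ ?_
      · intro i h1 h2
        refine lt_of_le_of_ne (hkmax i (Finset.mem_range.mpr (by omega))) ?_
        intro he
        exact absurd (hinj i (by omega) k hkw he) (by omega)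
      · intro i h1 h2
        refine lt_of_le_of_ne (hjmin i (Finset.mem_range.mpr (by omega))) ?_
        intro he
        exact absurd (hinj j hjw i (by omega) he) (by omega)
    have hasc : IsAscent (FreeGroup.invRev ((w.take j).drop k)) := aux_isAscent_invRev hdesc
    have hinf : ((w.take j).drop k) <:+: W :=
      (((w.take j).drop_suffix k).isInfix.trans (w.take_prefix j).isInfix).trans hwpre.isInfix
    have hle := hmax.2.2 _ hasc
      ⟨FreeGroup.invRev W, Or.inr (List.IsRotated.refl _), aux_invRev_infix hinf⟩
    have hgt : FreeGroup.mk A < FreeGroup.mk (FreeGroup.invRev ((w.take j).drop k)) := by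
      rw [← FreeGroup.inv_mk, aux_mk_drop_take (le_of_lt h), mul_inv_rev, inv_inv]
      exact lt_of_lt_of_le hwk (le_mul_of_one_le_left' hinvj)
    exact absurd hle (not_le.mpr hgt)
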